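/- Let $P$ be a coalgebra without counit and $T$ a subcoalgebra of the counitization $k\ltimes_d P$. Then exactly one of the following holds: (a) $T=0$; (b) $T=k\oplus Q$ for some subcoalgebra $Q$ of $P$; (c) $T=k(1,x)+(\{0\}\times R)$ for some coideal $R$ of $P$ and $x\in P\setminus R$ with $\Delta(x)-x\otimes x\in R\otimes R$, $\Delta(p)-x\otimes p\in R\otimes(kx+R)$ and $\Delta(p)-p\otimes x\in(kx+R)\otimes R$ for all $p\in R$. -/
import Mathlib

open TensorProduct

/-- Coassociativity of a (not necessarily counital) comultiplication. -/
def Coassoc {k : Type*} [Field k] {V : Type*} [AddCommGroup V] [Module k V]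
    (d : V →ₗ[k] V ⊗[k] V) : Prop :=
  (TensorProduct.assoc k V V V).toLinearMap ∘ₗ TensorProduct.map d LinearMap.id ∘ₗ d
    = TensorProduct.map LinearMap.id d ∘ₗ d

/-- The comultiplication of the counitization `k ⋉ P` of a non-counital coalgebra `P`:
`Δ(α,p) = α(1,0)⊗(1,0) + (1,0)⊗(0,p) + (0,p)⊗(1,0) + ∑(0,p₁)⊗(0,p₂)`. -/
noncomputable def counitComul {k : Type*} [Field k] {P : Type*} [AddCommGroup P] [Module k P]
    (dP : P →ₗ[k] P ⊗[k] P) : (k × P) →ₗ[k] (k × P) ⊗[k] (k × P) :=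
  LinearMap.toSpanSingleton k ((k × P) ⊗[k] (k × P))
      (((1 : k), (0 : P)) ⊗ₜ[k] ((1 : k), (0 : P))) ∘ₗ LinearMap.fst k k P
  + TensorProduct.mk k (k × P) (k × P) ((1 : k), (0 : P)) ∘ₗ
      LinearMap.inr k k P ∘ₗ LinearMap.snd k k P
  + (TensorProduct.mk k (k × P) (k × P)).flip ((1 : k), (0 : P)) ∘ₗ
      LinearMap.inr k k P ∘ₗ LinearMap.snd k k P
  + TensorProduct.map (LinearMap.inr k k P) (LinearMap.inr k k P) ∘ₗ dP ∘ₗ LinearMap.snd k k P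

section Aux
variable {k : Type*} [Field k] {P : Type*} [AddCommGroup P] [Module k P]

lemma counitComul_apply' (dP : P →ₗ[k] P ⊗[k] P) (t : k × P) :
    counitComul dP t
      = t.1 • (((1:k),(0:P)) ⊗ₜ[k] ((1:k),(0:P)))
        + ((1:k),(0:P)) ⊗ₜ[k] ((0:k), t.2)
        + ((0:k), t.2) ⊗ₜ[k] ((1:k),(0:P))
        + TensorProduct.map (LinearMap.inr k k P) (LinearMap.inr k k P) (dP t.2) := by
  simp [counitComul, TensorProduct.mk_apply, LinearMap.toSpanSingleton_apply]

/-- ε⊗id as a linear map. -/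
noncomputable def epsL (k : Type*) [Field k] (P : Type*) [AddCommGroup P] [Module k P] :
    (k × P) ⊗[k] (k × P) →ₗ[k] (k × P) :=
  TensorProduct.lift ((LinearMap.lsmul k (k × P)) ∘ₗ LinearMap.fst k k P)

@[simp] lemma epsL_tmul (a b : k × P) : epsL k P (a ⊗ₜ[k] b) = a.1 • b := rfl

/-- If φ maps T into S then map φ φ sends range (map T.subtype T.subtype)
into range (map S.subtype S.subtype). -/
lemma mapmap_mem {V W : Type*} [AddCommGroup V] [Module k V] [AddCommGroup W] [Module k W]
    {T : Submodule k V} {S : Submodule k W} (φ : V →ₗ[k] W) (hφ : ∀ t ∈ T, φ t ∈ S)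
    {z : V ⊗[k] V} (hz : z ∈ LinearMap.range (TensorProduct.map T.subtype T.subtype)) :
    TensorProduct.map φ φ z ∈ LinearMap.range (TensorProduct.map S.subtype S.subtype) := by
  obtain ⟨w, rfl⟩ := hz
  refine ⟨TensorProduct.map
      (LinearMap.codRestrict S (φ ∘ₗ T.subtype) fun t => hφ _ t.2)
      (LinearMap.codRestrict S (φ ∘ₗ T.subtype) fun t => hφ _ t.2) w, ?_⟩
  rw [← LinearMap.comp_apply, ← TensorProduct.map_comp, ← LinearMap.comp_apply,
    ← TensorProduct.map_comp, LinearMap.subtype_comp_codRestrict]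

lemma range_map_mono {V W : Type*} [AddCommGroup V] [Module k V] [AddCommGroup W] [Module k W]
    {R S : Submodule k V} (h : R ≤ S) {R' S' : Submodule k W} (h' : R' ≤ S') :
    LinearMap.range (TensorProduct.map R.subtype R'.subtype)
      ≤ LinearMap.range (TensorProduct.map S.subtype S'.subtype) := by
  rintro _ ⟨w, rfl⟩
  refine ⟨TensorProduct.map (Submodule.inclusion h) (Submodule.inclusion h') w, ?_⟩
  rw [← LinearMap.comp_apply, ← TensorProduct.map_comp]
  congr 1

/-- The correction map `(α,p) ↦ p - α•x`. -/
noncomputable def fx (k : Type*) [Field k] {P : Type*} [AddCommGroup P] [Module k P] (x : P) :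
    (k × P) →ₗ[k] P :=
  LinearMap.snd k k P - (LinearMap.toSpanSingleton k P x) ∘ₗ LinearMap.fst k k P

@[simp] lemma fx_apply (x : P) (t : k × P) : fx k x t = t.2 - t.1 • x := rfl

lemma mapfx_inr (x : P) (y : P ⊗[k] P) :
    TensorProduct.map (fx k x) (fx k x)
      (TensorProduct.map (LinearMap.inr k k P) (LinearMap.inr k k P) y) = y := by
  rw [← LinearMap.comp_apply, ← TensorProduct.map_comp]
  have h : (fx k x) ∘ₗ LinearMap.inr k k P = LinearMap.id := by
    ext p; simp
  rw [h, TensorProduct.map_id, LinearMap.id_apply]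

lemma mapfx_comul (dP : P →ₗ[k] P ⊗[k] P) (x : P) (t : k × P) :
    TensorProduct.map (fx k x) (fx k x) (counitComul dP t)
      = dP t.2 - x ⊗ₜ[k] t.2 - t.2 ⊗ₜ[k] x + t.1 • (x ⊗ₜ[k] x) := by
  rw [counitComul_apply']
  simp only [map_add, map_smul, TensorProduct.map_tmul, fx_apply, mapfx_inr]
  simp only [zero_sub, one_smul, sub_zero, zero_smul, TensorProduct.neg_tmul,
    TensorProduct.tmul_neg, neg_neg]
  abel

end Aux

theorem stmt13 {k : Type*} [Field k] {P : Type*} [AddCommGroup P] [Module k P]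
    (dP : P →ₗ[k] P ⊗[k] P) (hP : Coassoc dP)
    -- `T` is a subcoalgebra of the counitization `k ⋉ P`
    (T : Submodule k (k × P))
    (hT : ∀ t ∈ T, counitComul dP t ∈
      LinearMap.range (TensorProduct.map T.subtype T.subtype)) :
    -- then exactly one of the following three cases holds
    let Pa : Prop := T = ⊥
    let Pb : Prop := ∃ Q : Submodule k P,
      (∀ p ∈ Q, dP p ∈ LinearMap.range (TensorProduct.map Q.subtype Q.subtype)) ∧
      T = Submodule.prod ⊤ Q
    let Pc : Prop := ∃ R : Submodule k P, ∃ x : P,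
      (∀ p ∈ R, dP p ∈
        LinearMap.range (TensorProduct.map R.subtype (LinearMap.id (R := k) (M := P)))
          ⊔ LinearMap.range (TensorProduct.map (LinearMap.id (R := k) (M := P)) R.subtype)) ∧
      x ∉ R ∧
      dP x - x ⊗ₜ[k] x ∈ LinearMap.range (TensorProduct.map R.subtype R.subtype) ∧
      (∀ p ∈ R, dP p - x ⊗ₜ[k] p ∈
        LinearMap.range (TensorProduct.map R.subtype (Submodule.span k {x} ⊔ R).subtype)) ∧
      (∀ p ∈ R, dP p - p ⊗ₜ[k] x ∈
        LinearMap.range (TensorProduct.map (Submodule.span k {x} ⊔ R).subtype R.subtype)) ∧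
      T = Submodule.span k {((1 : k), x)} ⊔ Submodule.map (LinearMap.inr k k P) R
    (Pa ∧ ¬Pb ∧ ¬Pc) ∨ (¬Pa ∧ Pb ∧ ¬Pc) ∨ (¬Pa ∧ ¬Pb ∧ Pc) := by
  intro Pa Pb Pc
  -- a point in case-c form is never zero, and (1,0) is never in it
  have hc_ne : ∀ (R : Submodule k P) (x : P), x ∉ R →
      ((1:k),(0:P)) ∉ Submodule.span k {((1 : k), x)} ⊔ Submodule.map (LinearMap.inr k k P) R := by
    intro R x hxR hmem
    obtain ⟨a, ha, b, hb, hab⟩ := Submodule.mem_sup.mp hmem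
    obtain ⟨c, rfl⟩ := Submodule.mem_span_singleton.mp ha
    obtain ⟨r, hr, rfl⟩ := hb
    have h1 : c • (1:k) + 0 = 1 := congrArg Prod.fst hab
    have h2 : c • x + r = 0 := congrArg Prod.snd hab
    have hc : c = 1 := by simpa using h1
    subst hc
    apply hxR
    have : x = -r := by rw [one_smul] at h2; linear_combination (norm := module) h2
    rw [this]; exact R.neg_mem hr
  by_cases hbot : T = ⊥
  · left
    refine ⟨hbot, ?_, ?_⟩
    · rintro ⟨Q, -, hTQ⟩
      have h1 : ((1:k),(0:P)) ∈ T := by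
        rw [hTQ]; exact ⟨trivial, Q.zero_mem⟩
      rw [hbot, Submodule.mem_bot] at h1
      exact one_ne_zero (congrArg Prod.fst h1)
    · rintro ⟨R, x, -, -, -, -, -, hTx⟩
      have h1 : ((1:k), x) ∈ T := by
        rw [hTx]
        exact Submodule.mem_sup_left (Submodule.mem_span_singleton_self _)
      rw [hbot, Submodule.mem_bot] at h1
      exact one_ne_zero (congrArg Prod.fst h1)
  · -- T ≠ ⊥ : find an element of T with nonzero first coordinate
    have hex : ∃ t ∈ T, t.1 ≠ 0 := by
      by_contra hno
      push_neg at hno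
      apply hbot
      rw [Submodule.eq_bot_iff]
      intro t ht
      -- epsL kills range (map T.subtype T.subtype)
      have hkill : epsL k P ∘ₗ TensorProduct.map T.subtype T.subtype = 0 := by
        apply TensorProduct.ext'
        intro a b
        simp only [LinearMap.comp_apply, TensorProduct.map_tmul, epsL_tmul,
          LinearMap.zero_apply]
        have ha0 : (T.subtype a).1 = 0 := hno _ a.2
        rw [ha0, zero_smul]
      obtain ⟨w, hw⟩ := hT t ht
      have h0 : epsL k P (counitComul dP t) = 0 := by
        rw [← hw, ← LinearMap.comp_apply, hkill, LinearMap.zero_apply]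
      have hinr : epsL k P ∘ₗ
          TensorProduct.map (LinearMap.inr k k P) (LinearMap.inr k k P) = 0 := by
        apply TensorProduct.ext'
        intro a b
        simp
      rw [counitComul_apply'] at h0
      simp only [map_add, map_smul, epsL_tmul] at h0
      rw [← LinearMap.comp_apply, hinr] at h0
      simp only [LinearMap.zero_apply, add_zero, one_smul] at h0
      rw [hno _ ht] at h0
      simp only [zero_smul, smul_zero, zero_add, add_zero] at h0
      have ht2 : t.2 = 0 := congrArg Prod.snd h0
      have ht1 : t.1 = 0 := hno _ ht
      exact Prod.ext ht1 ht2
    obtain ⟨t, ht, ht1⟩ := hex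
    set x : P := t.1⁻¹ • t.2 with hxdef
    have hx1 : ((1:k), x) ∈ T := by
      have := T.smul_mem t.1⁻¹ ht
      have he : t.1⁻¹ • t = ((1:k), x) := by
        rw [Prod.smul_def, Prod.mk.injEq]
        exact ⟨inv_mul_cancel₀ ht1, rfl⟩
      rwa [he] at this
    set R : Submodule k P := Submodule.comap (LinearMap.inr k k P) T with hRdef
    have hRmem : ∀ p : P, p ∈ R ↔ ((0:k), p) ∈ T := fun p => Iff.rfl
    -- for any t ∈ T, the correction lies in R
    have hcorr : ∀ s ∈ T, fx k x s ∈ R := by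
      intro s hs
      rw [hRmem]
      have : ((0:k), s.2 - s.1 • x) = s - s.1 • ((1:k), x) := by
        rw [Prod.smul_def, Prod.mk.injEq]
        constructor
        · simp
        · rfl
      show ((0:k), s.2 - s.1 • x) ∈ T
      rw [this]
      exact T.sub_mem hs (T.smul_mem _ hx1)
    -- key: for t ∈ T, dP t.2 - x⊗t.2 - t.2⊗x + t.1•(x⊗x) ∈ range (map R.subtype R.subtype)
    have hkey : ∀ s ∈ T, dP s.2 - x ⊗ₜ[k] s.2 - s.2 ⊗ₜ[k] x + s.1 • (x ⊗ₜ[k] x)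
        ∈ LinearMap.range (TensorProduct.map R.subtype R.subtype) := by
      intro s hs
      rw [← mapfx_comul]
      exact mapmap_mem (fx k x) hcorr (hT s hs)
    by_cases h10 : ((1:k),(0:P)) ∈ T
    · -- case b
      refine Or.inr (Or.inl ⟨hbot, ?_, ?_⟩)
      · -- Pb holds with Q = R
        have hmemT : ∀ s ∈ T, s.2 ∈ R := by
          intro s hs
          rw [hRmem]
          have : ((0:k), s.2) = s - s.1 • ((1:k),(0:P)) := by
            rw [Prod.smul_def, Prod.mk.injEq]
            constructor
            · simp
            · simp
          rw [this]
          exact T.sub_mem hs (T.smul_mem _ h10)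
        refine ⟨R, ?_, ?_⟩
        · intro p hp
          have h1 := hT ((0:k), p) ((hRmem p).mp hp)
          have h2 := mapmap_mem (LinearMap.snd k k P) hmemT h1
          rw [counitComul_apply'] at h2
          simp only [map_add, map_smul, TensorProduct.map_tmul] at h2
          have hsnd : TensorProduct.map (LinearMap.snd k k P) (LinearMap.snd k k P)
              (TensorProduct.map (LinearMap.inr k k P) (LinearMap.inr k k P) (dP p))
              = dP p := by
            rw [← LinearMap.comp_apply, ← TensorProduct.map_comp]
            have h : (LinearMap.snd k k P) ∘ₗ LinearMap.inr k k P = LinearMap.id := by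
              ext q; simp
            rw [h, TensorProduct.map_id, LinearMap.id_apply]
          rw [hsnd] at h2
          simpa using h2
        · ext s
          simp only [Submodule.mem_prod, Submodule.mem_top, true_and]
          constructor
          · intro hs; exact hmemT s hs
          · intro hs
            have : s = s.1 • ((1:k),(0:P)) + ((0:k), s.2) := by
              rw [Prod.smul_def, Prod.mk.injEq]
              constructor
              · simp
              · simp
            rw [this]
            exact T.add_mem (T.smul_mem _ h10) ((hRmem s.2).mpr hs)
      · -- ¬ Pc
        rintro ⟨R', x', -, hx'R, -, -, -, hTx⟩
        rw [hTx] at h10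
        exact hc_ne R' x' hx'R h10
    · -- case c
      refine Or.inr (Or.inr ⟨hbot, ?_, ?_⟩)
      · -- ¬ Pb
        rintro ⟨Q, -, hTQ⟩
        apply h10
        rw [hTQ]
        exact ⟨trivial, Q.zero_mem⟩
      · -- Pc holds with R, x
        have hxR : x ∉ R := by
          intro hxRmem
          apply h10
          have : ((1:k),(0:P)) = ((1:k), x) - ((0:k), x) := by
            rw [Prod.mk.injEq]; constructor <;> simp
          rw [this]
          exact T.sub_mem hx1 ((hRmem x).mp hxRmem)
        have hhead : dP x - x ⊗ₜ[k] x
            ∈ LinearMap.range (TensorProduct.map R.subtype R.subtype) := by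
          have h := hkey ((1:k), x) hx1
          have e : dP ((1:k), x).2 - x ⊗ₜ[k] ((1:k), x).2 - ((1:k), x).2 ⊗ₜ[k] x
              + ((1:k), x).1 • (x ⊗ₜ[k] x) = dP x - x ⊗ₜ[k] x := by
            show dP x - x ⊗ₜ[k] x - x ⊗ₜ[k] x + (1:k) • (x ⊗ₜ[k] x) = dP x - x ⊗ₜ[k] x
            rw [one_smul]; abel
          rw [e] at h
          exact h
        have hRR : ∀ p ∈ R, dP p - x ⊗ₜ[k] p - p ⊗ₜ[k] x
            ∈ LinearMap.range (TensorProduct.map R.subtype R.subtype) := by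
          intro p hp
          have h := hkey ((0:k), p) ((hRmem p).mp hp)
          have e : dP ((0:k), p).2 - x ⊗ₜ[k] ((0:k), p).2 - ((0:k), p).2 ⊗ₜ[k] x
              + ((0:k), p).1 • (x ⊗ₜ[k] x) = dP p - x ⊗ₜ[k] p - p ⊗ₜ[k] x := by
            show dP p - x ⊗ₜ[k] p - p ⊗ₜ[k] x + (0:k) • (x ⊗ₜ[k] x)
              = dP p - x ⊗ₜ[k] p - p ⊗ₜ[k] x
            rw [zero_smul, add_zero]
          rw [e] at h
          exact h
        refine ⟨R, x, ?_, hxR, hhead, ?_, ?_, ?_⟩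
        · -- coideal condition
          intro p hp
          obtain ⟨w, hw⟩ := hRR p hp
          have hdp : dP p = TensorProduct.map R.subtype R.subtype w
              + x ⊗ₜ[k] p + p ⊗ₜ[k] x := by
            rw [hw]; abel
          rw [hdp]
          refine Submodule.add_mem _ (Submodule.add_mem _ ?_ ?_) ?_
          · -- w-part ∈ range (map R.subtype id)
            apply Submodule.mem_sup_left
            refine ⟨TensorProduct.map LinearMap.id R.subtype w, ?_⟩
            rw [← LinearMap.comp_apply, ← TensorProduct.map_comp]
            simp
          · -- x ⊗ p ∈ range (map id R.subtype)
            exact Submodule.mem_sup_right ⟨x ⊗ₜ[k] (⟨p, hp⟩ : R), rfl⟩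
          · -- p ⊗ x ∈ range (map R.subtype id)
            exact Submodule.mem_sup_left ⟨(⟨p, hp⟩ : R) ⊗ₜ[k] x, rfl⟩
        · -- Δp - x⊗p ∈ R ⊗ (span x ⊔ R)
          intro p hp
          have hle : R ≤ Submodule.span k {x} ⊔ R := le_sup_right
          obtain ⟨w, hw⟩ := hRR p hp
          have hdp : dP p - x ⊗ₜ[k] p = TensorProduct.map R.subtype R.subtype w
              + p ⊗ₜ[k] x := by
            rw [hw]; abel
          rw [hdp]
          refine Submodule.add_mem _ (range_map_mono le_rfl hle ⟨w, rfl⟩) ?_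
          exact ⟨(⟨p, hp⟩ : R) ⊗ₜ[k]
            (⟨x, Submodule.mem_sup_left (Submodule.mem_span_singleton_self _)⟩ :
              (Submodule.span k {x} ⊔ R : Submodule k P)), rfl⟩
        · -- Δp - p⊗x ∈ (span x ⊔ R) ⊗ R
          intro p hp
          have hle : R ≤ Submodule.span k {x} ⊔ R := le_sup_right
          obtain ⟨w, hw⟩ := hRR p hp
          have hdp : dP p - p ⊗ₜ[k] x = TensorProduct.map R.subtype R.subtype w
              + x ⊗ₜ[k] p := by
            rw [hw]; abel
          rw [hdp]
          refine Submodule.add_mem _ (range_map_mono hle le_rfl ⟨w, rfl⟩) ?_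
          exact ⟨(⟨x, Submodule.mem_sup_left (Submodule.mem_span_singleton_self _)⟩ :
              (Submodule.span k {x} ⊔ R : Submodule k P)) ⊗ₜ[k] (⟨p, hp⟩ : R), rfl⟩
        · -- the decomposition of T
          apply le_antisymm
          · intro s hs
            have hdec : s = s.1 • ((1:k), x) + ((0:k), s.2 - s.1 • x) := by
              rw [Prod.smul_def, Prod.mk.injEq]
              constructor
              · simp
              · simp
            rw [hdec]
            refine Submodule.add_mem _ ?_ ?_
            · exact Submodule.mem_sup_left
                (Submodule.smul_mem _ _ (Submodule.mem_span_singleton_self _))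
            · exact Submodule.mem_sup_right ⟨s.2 - s.1 • x, hcorr s hs, rfl⟩
          · rw [sup_le_iff]
            constructor
            · rw [Submodule.span_le, Set.singleton_subset_iff]
              exact hx1
            · rintro _ ⟨r, hr, rfl⟩
              exact (hRmem r).mp hr
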